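/- Let d ≥ 1 and N ≥ 1 be integers, and for each i ∈ {0, 1, …, N−1}^d let C_i denote the half-open grid cube ∏_{k=1}^d [i_k/N, (i_k+1)/N) ⊆ ℝ^d. Let P₁ and P₂ be subsets of [0,1)^d such that for every i ∈ {0, 1, …, N−1}^d both P₁ ∩ C_i and P₂ ∩ C_i are nonempty. Define the bipartite geometric graph G on the vertex set P₁ ∪ P₂ in which two distinct vertices x and y are adjacent if and only if one of them belongs to P₁, the other belongs to P₂, and their Euclidean distance satisfies |x − y| ≤ 2·√d/N. Then G is connected. -/

import Mathlib

/-!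
Every vertex lies in some grid cube, and each cube contains a point of `P₁` and a point of `P₂`.
Two points in the same or in neighbouring cubes are at distance at most `2 √d / N`, so a point
of `P₁` in one cube is adjacent to (or equal to) the chosen point of `P₂` in any neighbouring
cube. Hence the chosen points of `P₁` in neighbouring cubes are joined by a path of length two,
and since neighbouring cubes connect the whole grid, all vertices lie in one component.
-/

/-- The bipartite geometric graph on `P₁ ∪ P₂ ⊆ ℝ^d`: two distinct vertices are
adjacent iff one belongs to `P₁`, the other to `P₂`, and their Euclidean distance
is at most `2 √d / N`. -/
def bipartiteGeometricGraph (d N : ℕ) (P₁ P₂ : Set (EuclideanSpace ℝ (Fin d))) :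
    SimpleGraph ↥(P₁ ∪ P₂) where
  Adj x y := x ≠ y ∧
    (((x : EuclideanSpace ℝ (Fin d)) ∈ P₁ ∧ (y : EuclideanSpace ℝ (Fin d)) ∈ P₂) ∨
      ((x : EuclideanSpace ℝ (Fin d)) ∈ P₂ ∧ (y : EuclideanSpace ℝ (Fin d)) ∈ P₁)) ∧
    dist (x : EuclideanSpace ℝ (Fin d)) (y : EuclideanSpace ℝ (Fin d)) ≤ 2 * Real.sqrt d / N
  symm := by
    constructor
    rintro x y ⟨hxy, hmem, hdist⟩
    exact ⟨hxy.symm, hmem.elim (fun h => Or.inr ⟨h.2, h.1⟩) (fun h => Or.inl ⟨h.2, h.1⟩),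
      by rwa [dist_comm]⟩
  loopless := by
    constructor
    rintro x ⟨hx, -⟩
    exact hx rfl

open Relation

def gridCube {d : ℕ} (N : ℕ) (i : Fin d → Fin N) : Set (EuclideanSpace ℝ (Fin d)) :=
  {p | ∀ k, p k ∈ Set.Ico ((i k : ℝ) / N) (((i k : ℝ) + 1) / N)}

def GridNeighbor {d N : ℕ} (i j : Fin d → Fin N) : Prop :=
  ∀ k, (i k : ℕ) ≤ j k + 1 ∧ (j k : ℕ) ≤ i k + 1

theorem gridNeighbor_refl {d N : ℕ} (i : Fin d → Fin N) : GridNeighbor i i :=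
  fun _ => ⟨Nat.le_succ _, Nat.le_succ _⟩

/-- Lowering every coordinate by one (truncated at `0`) is a neighbour step, and `N` such steps
lead from any cell to the corner cell. -/
theorem eqvGen_gridNeighbor {d N : ℕ} (i j : Fin d → Fin N) : EqvGen GridNeighbor i j := by
  let lower (c : Fin d → Fin N) (n : ℕ) : Fin d → Fin N :=
    fun k => ⟨c k - n, (Nat.sub_le _ _).trans_lt (c k).isLt⟩
  have descend (c : Fin d → Fin N) (n : ℕ) : EqvGen GridNeighbor c (lower c n) := by
    induction n with
    | zero => exact EqvGen.refl c
    | succ n ih => exact ih.trans _ _ _ (.rel _ _ fun k => by simp only [lower]; omega)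
  have corner : lower i N = lower j N :=
    funext fun k => Fin.ext (by simp only [lower]; omega)
  exact (descend i N).trans _ _ _ (corner ▸ (descend j N).symm _ _)

theorem EuclideanSpace.dist_le_sqrt_card_mul {ι : Type*} [Fintype ι] {p q : EuclideanSpace ℝ ι}
    {r : ℝ} (hr : 0 ≤ r) (h : ∀ k, |p k - q k| ≤ r) :
    dist p q ≤ √(Fintype.card ι) * r := by
  calc dist p q = √(∑ k, dist (p k) (q k) ^ 2) := EuclideanSpace.dist_eq p q
    _ ≤ √(∑ _k : ι, r ^ 2) := by
      gcongr with k
      exact (Real.dist_eq _ _).trans_le (h k)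
    _ = √(Fintype.card ι) * r := by
      rw [Finset.sum_const, Finset.card_univ, nsmul_eq_mul, Real.sqrt_mul (by positivity),
        Real.sqrt_sq hr]

theorem exists_mem_gridCube {d N : ℕ} (hN : 1 ≤ N) {p : EuclideanSpace ℝ (Fin d)}
    (hp : ∀ k, p k ∈ Set.Ico (0 : ℝ) 1) : ∃ i : Fin d → Fin N, p ∈ gridCube N i := by
  have hN₀ : (0 : ℝ) < N := by exact_mod_cast hN
  have hNp (k : Fin d) : 0 ≤ (N : ℝ) * p k := mul_nonneg hN₀.le (hp k).1
  refine ⟨fun k => ⟨⌊(N : ℝ) * p k⌋₊, (Nat.floor_lt (hNp k)).2 ?_⟩, fun k => ⟨?_, ?_⟩⟩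
  · simpa using mul_lt_mul_of_pos_left (hp k).2 hN₀
  · rw [div_le_iff₀ hN₀, mul_comm (p k)]
    exact Nat.floor_le (hNp k)
  · rw [lt_div_iff₀ hN₀, mul_comm (p k)]
    exact Nat.lt_floor_add_one _

theorem dist_le_of_mem_gridCube {d N : ℕ} {i j : Fin d → Fin N} (hij : GridNeighbor i j)
    {p q : EuclideanSpace ℝ (Fin d)} (hp : p ∈ gridCube N i) (hq : q ∈ gridCube N j) :
    dist p q ≤ 2 * √d / N := by
  have hcoord (k : Fin d) : |p k - q k| ≤ 2 / N := by
    have hi : (i k : ℝ) ≤ j k + 1 := by exact_mod_cast (hij k).1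
    have hj : (j k : ℝ) ≤ i k + 1 := by exact_mod_cast (hij k).2
    obtain ⟨hp₀, hp₁⟩ := hp k
    obtain ⟨hq₀, hq₁⟩ := hq k
    have hpq : ((i k : ℝ) + 1) / N - j k / N ≤ 2 / N := by
      rw [div_sub_div_same]; gcongr; linarith
    have hqp : ((j k : ℝ) + 1) / N - i k / N ≤ 2 / N := by
      rw [div_sub_div_same]; gcongr; linarith
    rw [abs_sub_le_iff]
    constructor <;> linarith
  calc dist p q ≤ √(Fintype.card (Fin d)) * (2 / N) :=
        EuclideanSpace.dist_le_sqrt_card_mul (by positivity) hcoord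
    _ = 2 * √d / N := by rw [Fintype.card_fin]; ring

theorem bipartiteGeometricGraph_reachable_of_mem_gridCube {d N : ℕ}
    {P₁ P₂ : Set (EuclideanSpace ℝ (Fin d))} {x y : ↥(P₁ ∪ P₂)} {i j : Fin d → Fin N}
    (hx : (x : EuclideanSpace ℝ (Fin d)) ∈ P₁) (hy : (y : EuclideanSpace ℝ (Fin d)) ∈ P₂)
    (hxi : (x : EuclideanSpace ℝ (Fin d)) ∈ gridCube N i)
    (hyj : (y : EuclideanSpace ℝ (Fin d)) ∈ gridCube N j) (hij : GridNeighbor i j) :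
    (bipartiteGeometricGraph d N P₁ P₂).Reachable x y := by
  by_cases hxy : x = y
  · exact hxy ▸ .refl x
  · exact SimpleGraph.Adj.reachable ⟨hxy, .inl ⟨hx, hy⟩, dist_le_of_mem_gridCube hij hxi hyj⟩

theorem bipartiteGeometricGraph_connected_general (d N : ℕ) (hN : 1 ≤ N)
    (P₁ P₂ : Set (EuclideanSpace ℝ (Fin d)))
    (hP₁cube : ∀ p ∈ P₁, ∀ k, p k ∈ Set.Ico (0 : ℝ) 1)
    (hP₂cube : ∀ p ∈ P₂, ∀ k, p k ∈ Set.Ico (0 : ℝ) 1)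
    (h₁ : ∀ i : Fin d → Fin N, ∃ p ∈ P₁,
      ∀ k, p k ∈ Set.Ico ((i k : ℝ) / N) (((i k : ℝ) + 1) / N))
    (h₂ : ∀ i : Fin d → Fin N, ∃ p ∈ P₂,
      ∀ k, p k ∈ Set.Ico ((i k : ℝ) / N) (((i k : ℝ) + 1) / N)) :
    (bipartiteGeometricGraph d N P₁ P₂).Connected := by
  set G := bipartiteGeometricGraph d N P₁ P₂
  choose a₁ ha₁ ha₁i using h₁
  choose a₂ ha₂ ha₂i using h₂
  let c₁ (i : Fin d → Fin N) : ↥(P₁ ∪ P₂) := ⟨a₁ i, .inl (ha₁ i)⟩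
  let c₂ (i : Fin d → Fin N) : ↥(P₁ ∪ P₂) := ⟨a₂ i, .inr (ha₂ i)⟩
  have cross {i j} (hij : GridNeighbor i j) : G.Reachable (c₁ i) (c₂ j) :=
    bipartiteGeometricGraph_reachable_of_mem_gridCube (ha₁ i) (ha₂ j) (ha₁i i) (ha₂i j) hij
  have hcells (i j : Fin d → Fin N) : G.Reachable (c₁ i) (c₁ j) :=
    ((G.reachable_is_equivalence.comap c₁).eqvGen_iff).1 <|
      EqvGen.mono (fun i j hij => (cross hij).trans (cross (gridNeighbor_refl j)).symm)
        _ _ (eqvGen_gridNeighbor i j)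
  have hvertex (x : ↥(P₁ ∪ P₂)) : ∃ i, G.Reachable x (c₁ i) := by
    rcases x.2 with hx | hx
    · obtain ⟨i, hxi⟩ := exists_mem_gridCube hN (hP₁cube x hx)
      have hxc₂ : G.Reachable x (c₂ i) := bipartiteGeometricGraph_reachable_of_mem_gridCube
        hx (ha₂ i) hxi (ha₂i i) (gridNeighbor_refl i)
      exact ⟨i, hxc₂.trans (cross (gridNeighbor_refl i)).symm⟩
    · obtain ⟨i, hxi⟩ := exists_mem_gridCube hN (hP₂cube x hx)
      have hc₁x : G.Reachable (c₁ i) x := bipartiteGeometricGraph_reachable_of_mem_gridCube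
        (ha₁ i) hx (ha₁i i) hxi (gridNeighbor_refl i)
      exact ⟨i, hc₁x.symm⟩
  refine G.connected_iff_exists_forall_reachable.2 ⟨c₁ fun _ => ⟨0, hN⟩, fun x => ?_⟩
  obtain ⟨j, hxj⟩ := hvertex x
  exact (hcells _ j).trans hxj.symm

/-- Deterministic core of the connectivity theorem (Theorem 1): if every grid cube
of side `1/N` of the unit cube contains a point of `P₁` and a point of `P₂`, the
bipartite geometric graph with threshold `2 √d / N` is connected. -/
theorem bipartiteGeometricGraph_connected (d N : ℕ) (hd : 1 ≤ d) (hN : 1 ≤ N)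
    (P₁ P₂ : Set (EuclideanSpace ℝ (Fin d)))
    (hP₁cube : ∀ p ∈ P₁, ∀ k, p k ∈ Set.Ico (0 : ℝ) 1)
    (hP₂cube : ∀ p ∈ P₂, ∀ k, p k ∈ Set.Ico (0 : ℝ) 1)
    (h₁ : ∀ i : Fin d → Fin N, ∃ p ∈ P₁,
      ∀ k, p k ∈ Set.Ico ((i k : ℝ) / N) (((i k : ℝ) + 1) / N))
    (h₂ : ∀ i : Fin d → Fin N, ∃ p ∈ P₂,
      ∀ k, p k ∈ Set.Ico ((i k : ℝ) / N) (((i k : ℝ) + 1) / N)) :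
    (bipartiteGeometricGraph d N P₁ P₂).Connected :=
  bipartiteGeometricGraph_connected_general d N hN P₁ P₂ hP₁cube hP₂cube h₁ h₂
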